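/- Let φ : ℝ^m → ℝ be a convex function such that φ − φ_P is bounded, where φ_P is the support function of a convex body P ⊂ ℝ^m. Then the closure of the image of the subgradient map of φ, i.e. cl(⋃_{x∈ℝ^m} dφ|_x), is contained in P, and it contains the interior of P; in particular the Lebesgue measure of the image of the subgradient map equals Vol_m(P). -/
import Mathlib


open scoped RealInnerProductSpace

/-- The subgradient set of a convex function `φ` at `x`. -/
def subgradAt {m : ℕ} (φ : EuclideanSpace ℝ (Fin m) → ℝ) (x : EuclideanSpace ℝ (Fin m)) :
    Set (EuclideanSpace ℝ (Fin m)) :=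
  {p | ∀ y, φ x + ⟪p, y - x⟫ ≤ φ y}

/-- Let `φ` be a convex function on `ℝ^m` with `φ - φ_P` bounded, `P` a convex
body. Then the closure of the image of the subgradient map of `φ` is contained in `P`, the
image contains the interior of `P`, and the Lebesgue measure of the image equals `Vol(P)`. -/
theorem stmt13 (m : ℕ) (P : Set (EuclideanSpace ℝ (Fin m)))
    (hPc : IsCompact P) (hPconv : Convex ℝ P) (hPint : (interior P).Nonempty)
    (φ : EuclideanSpace ℝ (Fin m) → ℝ) (hφ : ConvexOn ℝ Set.univ φ)
    (M : ℝ) (hM : ∀ x, |φ x - sSup ((fun q => ⟪x, q⟫) '' P)| ≤ M) :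
    closure (⋃ x, subgradAt φ x) ⊆ P ∧
    interior P ⊆ ⋃ x, subgradAt φ x ∧
    MeasureTheory.volume (⋃ x, subgradAt φ x) = MeasureTheory.volume P := by
  classical
  have hPne : P.Nonempty := hPint.mono interior_subset
  set fP : EuclideanSpace ℝ (Fin m) → ℝ := fun y => sSup ((fun q => ⟪y, q⟫) '' P) with hfP
  have himne : ∀ y : EuclideanSpace ℝ (Fin m), ((fun q => ⟪y, q⟫) '' P).Nonempty := fun y => hPne.image _
  have hbdd : ∀ y : EuclideanSpace ℝ (Fin m), BddAbove ((fun q => ⟪y, q⟫) '' P) := by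
    intro y
    exact (hPc.image (Continuous.inner continuous_const continuous_id)).bddAbove
  have hle : ∀ y : EuclideanSpace ℝ (Fin m), ∀ q ∈ P, ⟪y, q⟫ ≤ fP y := fun y q hq =>
    le_csSup (hbdd y) ⟨q, hq, rfl⟩
  have hsup_le : ∀ (y : EuclideanSpace ℝ (Fin m)) (c : ℝ), (∀ q ∈ P, ⟪y, q⟫ ≤ c) → fP y ≤ c := by
    intro y c h
    exact csSup_le (himne y) (by rintro _ ⟨q, hq, rfl⟩; exact h q hq)
  have hφ_le : ∀ y : EuclideanSpace ℝ (Fin m), φ y ≤ fP y + M := by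
    intro y; have := abs_le.1 (hM y); linarith [this.2]
  have hφ_ge : ∀ y : EuclideanSpace ℝ (Fin m), fP y - M ≤ φ y := by
    intro y; have := abs_le.1 (hM y); linarith [this.1]
  -- Step A : the subgradient image is contained in P
  have hSsubP : (⋃ x, subgradAt φ x) ⊆ P := by
    rintro p hp
    obtain ⟨x, hx⟩ := Set.mem_iUnion.1 hp
    -- first: ⟪p, y⟫ ≤ fP y for all y
    have hinner : ∀ y : EuclideanSpace ℝ (Fin m), ⟪p, y⟫ ≤ fP y := by
      intro y
      refine le_of_forall_pos_le_add ?_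
      intro ε hε
      set C : ℝ := M + ⟪p, x⟫ - φ x with hC
      set t : ℝ := max 1 (C / ε) with ht
      have ht1 : (1 : ℝ) ≤ t := le_max_left _ _
      have htpos : 0 < t := lt_of_lt_of_le one_pos ht1
      have hkey : t * ⟪p, y⟫ ≤ t * fP y + C := by
        have h1 : φ x + ⟪p, t • y - x⟫ ≤ φ (t • y) := hx (t • y)
        have h2 : ⟪p, t • y - x⟫ = t * ⟪p, y⟫ - ⟪p, x⟫ := by
          rw [inner_sub_right, real_inner_smul_right]
        have h3 : fP (t • y) ≤ t * fP y := by
          refine hsup_le _ _ ?_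
          intro q hq
          have : ⟪t • y, q⟫ = t * ⟪y, q⟫ := real_inner_smul_left _ _ _
          rw [this]
          exact mul_le_mul_of_nonneg_left (hle y q hq) htpos.le
        have h4 := hφ_le (t • y)
        rw [h2] at h1
        linarith
      have hdiv : ⟪p, y⟫ ≤ fP y + C / t := by
        have h5 : t * ⟪p, y⟫ ≤ t * (fP y + C / t) := by
          have : t * (fP y + C / t) = t * fP y + C := by
            field_simp
          linarith [hkey, this.ge]
        exact le_of_mul_le_mul_left h5 htpos
      have hCt : C / t ≤ ε := by
        have h6 : C / ε ≤ t := le_max_right _ _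
        have h7 : C ≤ t * ε := (div_le_iff₀ hε).1 h6
        rw [div_le_iff₀ htpos]
        linarith [h7]
      linarith
    -- now separation
    by_contra hpP
    obtain ⟨f, u, hfu, huf⟩ :=
      geometric_hahn_banach_closed_point hPconv hPc.isClosed hpP
    set y : EuclideanSpace ℝ (Fin m) := (InnerProductSpace.toDual ℝ (EuclideanSpace ℝ (Fin m))).symm f with hy
    have hyz : ∀ z : EuclideanSpace ℝ (Fin m), ⟪y, z⟫ = f z := fun z => by rw [hy]; exact InnerProductSpace.toDual_symm_apply
    have h8 : fP y ≤ u := hsup_le y u (fun q hq => by rw [hyz q]; exact (hfu q hq).le)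
    have h9 : u < ⟪p, y⟫ := by
      rw [real_inner_comm, hyz p]; exact huf
    have := hinner y
    linarith
  have hclosure : closure (⋃ x, subgradAt φ x) ⊆ P :=
    closure_minimal hSsubP hPc.isClosed
  -- Step B : interior P ⊆ image
  have hφcont : Continuous φ := by
    exact continuousOn_univ.mp (ConvexOn.continuousOn isOpen_univ hφ)
  have hintS : interior P ⊆ ⋃ x, subgradAt φ x := by
    intro p hp
    obtain ⟨ε, hε, hball⟩ := Metric.mem_nhds_iff.1 (mem_interior_iff_mem_nhds.1 hp)
    set ψ : EuclideanSpace ℝ (Fin m) → ℝ := fun y => φ y - ⟪p, y⟫ with hψ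
    have hψcont : Continuous ψ :=
      hφcont.sub (Continuous.inner continuous_const continuous_id)
    have hcoer : ∀ y : EuclideanSpace ℝ (Fin m), y ≠ 0 → ε / 2 * ‖y‖ - M ≤ ψ y := by
      intro y hy
      set u : EuclideanSpace ℝ (Fin m) := ‖y‖⁻¹ • y with hu
      have hny : 0 < ‖y‖ := norm_pos_iff.2 hy
      have hnu : ‖u‖ = 1 := by
        rw [hu, norm_smul, norm_inv, norm_norm, inv_mul_cancel₀ hny.ne']
      have hq : p + (ε / 2) • u ∈ P := by
        apply hball
        simp only [Metric.mem_ball, dist_eq_norm]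
        have : p + (ε / 2) • u - p = (ε / 2) • u := by abel
        rw [this, norm_smul, hnu, mul_one, Real.norm_eq_abs, abs_of_pos (by linarith)]
        linarith
      have hyu : ⟪y, u⟫ = ‖y‖ := by
        rw [hu, real_inner_smul_right, real_inner_self_eq_norm_mul_norm]
        field_simp
      have h1 : ⟪y, p + (ε / 2) • u⟫ ≤ fP y := hle y _ hq
      have h2 : ⟪y, p + (ε / 2) • u⟫ = ⟪y, p⟫ + ε / 2 * ‖y‖ := by
        rw [inner_add_right, real_inner_smul_right, hyu]
      have h3 := hφ_ge y
      have h4 : ⟪y, p⟫ = ⟪p, y⟫ := real_inner_comm _ _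
      simp only [hψ]
      linarith
    set R : ℝ := max 1 ((ψ 0 + M) / (ε / 2)) with hR
    have hR1 : (1 : ℝ) ≤ R := le_max_left _ _
    obtain ⟨x, hxball, hxmin⟩ :=
      (isCompact_closedBall (0 : EuclideanSpace ℝ (Fin m)) R).exists_isMinOn
        ⟨0, Metric.mem_closedBall_self (by linarith)⟩ (hψcont.continuousOn)
    have h0ball : (0 : EuclideanSpace ℝ (Fin m)) ∈ Metric.closedBall (0 : EuclideanSpace ℝ (Fin m)) R :=
      Metric.mem_closedBall_self (by linarith)
    have hglobal : ∀ y : EuclideanSpace ℝ (Fin m), ψ x ≤ ψ y := by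
      intro y
      by_cases hyb : y ∈ Metric.closedBall (0 : EuclideanSpace ℝ (Fin m)) R
      · exact hxmin hyb
      · have hny : R < ‖y‖ := by
          simpa [Metric.mem_closedBall, dist_eq_norm] using hyb
        have hy0 : y ≠ 0 := by
          intro h; rw [h, norm_zero] at hny; linarith
        have h5 := hcoer y hy0
        have h6 : (ψ 0 + M) / (ε / 2) ≤ R := le_max_right _ _
        have h7 : ψ 0 + M ≤ R * (ε / 2) := (div_le_iff₀ (by linarith)).1 h6
        have h8 : ψ x ≤ ψ 0 := hxmin h0ball
        have h9 : ε / 2 * R ≤ ε / 2 * ‖y‖ :=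
          mul_le_mul_of_nonneg_left hny.le (by linarith)
        have h10 : R * (ε / 2) = ε / 2 * R := mul_comm _ _
        clear_value ψ R
        linarith
    refine Set.mem_iUnion.2 ⟨x, ?_⟩
    intro y
    have := hglobal y
    simp only [hψ] at this
    have h9 : ⟪p, y - x⟫ = ⟪p, y⟫ - ⟪p, x⟫ := inner_sub_right _ _ _
    linarith
  refine ⟨hclosure, hintS, ?_⟩
  -- Step C : measure
  have hfr : MeasureTheory.volume (frontier P) = 0 := hPconv.addHaar_frontier MeasureTheory.volume
  have h1 : MeasureTheory.volume P ≤ MeasureTheory.volume (interior P) := by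
    calc MeasureTheory.volume P ≤ MeasureTheory.volume (interior P ∪ frontier P) := by
          apply MeasureTheory.measure_mono
          intro z hz
          rcases Classical.em (z ∈ interior P) with h | h
          · exact Or.inl h
          · exact Or.inr ⟨subset_closure hz, h⟩
      _ ≤ MeasureTheory.volume (interior P) + MeasureTheory.volume (frontier P) :=
          MeasureTheory.measure_union_le _ _
      _ = MeasureTheory.volume (interior P) := by rw [hfr, add_zero]
  have h2 : MeasureTheory.volume (interior P) ≤ MeasureTheory.volume (⋃ x, subgradAt φ x) :=
    MeasureTheory.measure_mono hintS
  have h3 : MeasureTheory.volume (⋃ x, subgradAt φ x) ≤ MeasureTheory.volume P :=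
    MeasureTheory.measure_mono hSsubP
  exact le_antisymm h3 (le_trans h1 h2)
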